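/- For every natural number n ≥ 2 and every x, the identity Kₙ(x) = x²Tₙ(x) + 2xT_{n−1}(x) + 3T_{n−2}(x) holds. -/
import Mathlib


/-- Tribonacci polynomials over a commutative ring. -/
def tribPoly {R : Type*} [CommRing R] (x : R) : ℕ → R
  | 0 => 0
  | 1 => 1
  | 2 => x ^ 2
  | n + 3 => x ^ 2 * tribPoly x (n + 2) + x * tribPoly x (n + 1) + tribPoly x n

/-- Tribonacci-Lucas polynomials over a commutative ring. -/
def tribLucasPoly {R : Type*} [CommRing R] (x : R) : ℕ → R
  | 0 => 3
  | 1 => x ^ 2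
  | 2 => x ^ 4 + 2 * x
  | n + 3 => x ^ 2 * tribLucasPoly x (n + 2) + x * tribLucasPoly x (n + 1) + tribLucasPoly x n

lemma tribAux {R : Type*} [CommRing R] (x : R) : ∀ n : ℕ,
    tribLucasPoly x (n + 2) =
      x ^ 2 * tribPoly x (n + 2) + 2 * x * tribPoly x (n + 1) + 3 * tribPoly x n
  | 0 => by simp [tribPoly, tribLucasPoly]; ring
  | 1 => by simp [tribPoly, tribLucasPoly]; ring
  | 2 => by simp [tribPoly, tribLucasPoly]; ring
  | n + 3 => by
    have h0 := tribAux x n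
    have h1 := tribAux x (n + 1)
    have h2 := tribAux x (n + 2)
    have hL : tribLucasPoly x (n + 5) =
        x ^ 2 * tribLucasPoly x (n + 4) + x * tribLucasPoly x (n + 3) +
          tribLucasPoly x (n + 2) := rfl
    have hT : tribPoly x (n + 5) =
        x ^ 2 * tribPoly x (n + 4) + x * tribPoly x (n + 3) + tribPoly x (n + 2) := rfl
    have hT4 : tribPoly x (n + 4) =
        x ^ 2 * tribPoly x (n + 3) + x * tribPoly x (n + 2) + tribPoly x (n + 1) := rfl
    have hT3 : tribPoly x (n + 3) =
        x ^ 2 * tribPoly x (n + 2) + x * tribPoly x (n + 1) + tribPoly x n := rfl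
    show tribLucasPoly x (n + 5) = _
    rw [hL, h0, h1, h2, show n + 3 + 2 = n + 5 from rfl, hT, hT4, hT3]
    ring

theorem tribLucasPoly_eq_tribPoly {R : Type*} [CommRing R] (x : R) (n : ℕ) (hn : 2 ≤ n) :
    tribLucasPoly x n =
      x ^ 2 * tribPoly x n + 2 * x * tribPoly x (n - 1) + 3 * tribPoly x (n - 2) := by
  obtain ⟨m, rfl⟩ := Nat.exists_eq_add_of_le hn
  simpa [Nat.add_comm, Nat.add_sub_cancel] using tribAux x m
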